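/- arXiv:2107.04557 — 7 statements merged into one kernel-verified Lean document; each statement's English description precedes it below -/
import Mathlib

section
/- If λ ≠ cμ₁ and λ ≠ c(μ₁ - μ₂), then the 2c roots θᵢ (0 ≤ i ≤ 2c-1) defined by θᵢ = ½(λ-(i+1)μ₁-(c-1-i)μ₂) - ½√((λ-(i+1)μ₁-(c-1-i)μ₂)²+4(c-1-i)λμ₂) for 0 ≤ i ≤ c-1 and θᵢ₊c = ½(λ-(i+1)μ₁-(c-1-i)μ₂) + ½√((λ-(i+1)μ₁-(c-1-i)μ₂)²+4(c-1-i)λμ₂) for 0 ≤ i ≤ c-1, are pairwise distinct real numbers. -/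
/-- A "minus" root satisfies its quadratic. -/
lemma root_minus (b k lam mu2 : ℝ) (hk : 0 ≤ k) (hl : 0 ≤ lam) (hm : 0 ≤ mu2) :
    (b / 2 - Real.sqrt (b ^ 2 + 4 * k * lam * mu2) / 2) ^ 2
      = b * (b / 2 - Real.sqrt (b ^ 2 + 4 * k * lam * mu2) / 2) + k * lam * mu2 := by
  have h : Real.sqrt (b ^ 2 + 4 * k * lam * mu2) ^ 2 = b ^ 2 + 4 * k * lam * mu2 :=
    Real.sq_sqrt (by positivity)
  linear_combination h / 4

/-- A "plus" root satisfies its quadratic. -/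
lemma root_plus (b k lam mu2 : ℝ) (hk : 0 ≤ k) (hl : 0 ≤ lam) (hm : 0 ≤ mu2) :
    (b / 2 + Real.sqrt (b ^ 2 + 4 * k * lam * mu2) / 2) ^ 2
      = b * (b / 2 + Real.sqrt (b ^ 2 + 4 * k * lam * mu2) / 2) + k * lam * mu2 := by
  have h : Real.sqrt (b ^ 2 + 4 * k * lam * mu2) ^ 2 = b ^ 2 + 4 * k * lam * mu2 :=
    Real.sq_sqrt (by positivity)
  linear_combination h / 4

/-- Roots coming from distinct quadratics (distinct indices) never coincide. -/
lemma diff_roots (c : ℕ) (lam mu1 mu2 : ℝ) (hl : 0 < lam) (h1 : 0 < mu1) (h2 : 0 < mu2)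
    (hne2 : lam ≠ (c : ℝ) * (mu1 - mu2)) (i i' : ℕ) (hi : i < c) (hi' : i' < c)
    (hne : i ≠ i') (x : ℝ)
    (e1 : x ^ 2 = (lam - ((i : ℝ) + 1) * mu1 - ((c - 1 - i : ℕ) : ℝ) * mu2) * x
        + ((c - 1 - i : ℕ) : ℝ) * lam * mu2)
    (e2 : x ^ 2 = (lam - ((i' : ℝ) + 1) * mu1 - ((c - 1 - i' : ℕ) : ℝ) * mu2) * x
        + ((c - 1 - i' : ℕ) : ℝ) * lam * mu2) : False := by
  have hci : ((c - 1 - i : ℕ) : ℝ) = (c : ℝ) - 1 - i := by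
    have h : (c - 1 - i) + (i + 1) = c := by omega
    have := congrArg (Nat.cast : ℕ → ℝ) h
    push_cast at this; linarith
  have hci' : ((c - 1 - i' : ℕ) : ℝ) = (c : ℝ) - 1 - i' := by
    have h : (c - 1 - i') + (i' + 1) = c := by omega
    have := congrArg (Nat.cast : ℕ → ℝ) h
    push_cast at this; linarith
  rw [hci] at e1
  rw [hci'] at e2
  have hd : ((i' : ℝ) - i) ≠ 0 := by
    have : (i : ℝ) ≠ i' := by exact_mod_cast fun h => hne (by exact_mod_cast h)
    intro h; exact this (by linarith)
  have hx : (mu2 - mu1) * x = lam * mu2 := by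
    have key : ((i' : ℝ) - i) * ((mu2 - mu1) * x - lam * mu2) = 0 := by
      linear_combination e1 - e2
    have := mul_eq_zero.mp key
    rcases this with h | h
    · exact absurd h hd
    · linarith
  have hfin : lam * mu1 * mu2 * (lam + (c : ℝ) * (mu2 - mu1)) = 0 := by
    linear_combination (mu2 - mu1) ^ 2 * e1
      - ((mu2 - mu1) * x + lam * mu2
          - (lam - ((i : ℝ) + 1) * mu1 - ((c : ℝ) - 1 - i) * mu2) * (mu2 - mu1)) * hx
  have hpos : lam * mu1 * mu2 > 0 := by positivity
  have : lam + (c : ℝ) * (mu2 - mu1) = 0 := by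
    rcases mul_eq_zero.mp hfin with h | h
    · exact absurd h (ne_of_gt hpos)
    · exact h
  exact hne2 (by linarith)

/-- The plus and minus root of the same quadratic never coincide (given λ ≠ cμ₁). -/
lemma same_roots (c : ℕ) (lam mu1 mu2 : ℝ) (hl : 0 < lam) (h1 : 0 < mu1) (h2 : 0 < mu2)
    (hne1 : lam ≠ (c : ℝ) * mu1) (i : ℕ) (hi : i < c)
    (h : (lam - ((i : ℝ) + 1) * mu1 - ((c - 1 - i : ℕ) : ℝ) * mu2) / 2
          - Real.sqrt ((lam - ((i : ℝ) + 1) * mu1 - ((c - 1 - i : ℕ) : ℝ) * mu2) ^ 2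
            + 4 * ((c - 1 - i : ℕ) : ℝ) * lam * mu2) / 2
        = (lam - ((i : ℝ) + 1) * mu1 - ((c - 1 - i : ℕ) : ℝ) * mu2) / 2
          + Real.sqrt ((lam - ((i : ℝ) + 1) * mu1 - ((c - 1 - i : ℕ) : ℝ) * mu2) ^ 2
            + 4 * ((c - 1 - i : ℕ) : ℝ) * lam * mu2) / 2) : False := by
  set b := lam - ((i : ℝ) + 1) * mu1 - ((c - 1 - i : ℕ) : ℝ) * mu2 with hb
  have hs : Real.sqrt (b ^ 2 + 4 * ((c - 1 - i : ℕ) : ℝ) * lam * mu2) = 0 := by linarith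
  have harg : b ^ 2 + 4 * ((c - 1 - i : ℕ) : ℝ) * lam * mu2 = 0 := by
    have h0 : (0:ℝ) ≤ b ^ 2 + 4 * ((c - 1 - i : ℕ) : ℝ) * lam * mu2 := by positivity
    nlinarith [Real.sq_sqrt h0, hs]
  have hknn : (0:ℝ) ≤ 4 * ((c - 1 - i : ℕ) : ℝ) * lam * mu2 := by positivity
  have hb0 : b = 0 := by nlinarith [sq_nonneg b]
  have hk0 : ((c - 1 - i : ℕ) : ℝ) * lam * mu2 = 0 := by nlinarith [sq_nonneg b]
  have hk : (c - 1 - i : ℕ) = 0 := by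
    have : ((c - 1 - i : ℕ) : ℝ) = 0 := by
      rcases mul_eq_zero.mp hk0 with h' | h'
      · rcases mul_eq_zero.mp h' with h'' | h''
        · exact h''
        · exact absurd h'' (ne_of_gt hl)
      · exact absurd h' (ne_of_gt h2)
    exact_mod_cast this
  have hic : i + 1 = c := by omega
  apply hne1
  have hcast : ((i : ℝ) + 1) = (c : ℝ) := by exact_mod_cast congrArg (Nat.cast : ℕ → ℝ) hic
  have hk' : ((c - 1 - i : ℕ) : ℝ) = 0 := by exact_mod_cast hk
  rw [hb, hk', hcast] at hb0
  linarith

/-- under λ ≠ cμ₁ and λ ≠ c(μ₁-μ₂), the 2c roots θ₀,…,θ_{2c-1}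
(the c "minus" roots followed by the c "plus" roots) are pairwise distinct. -/
theorem stmt_4 (c : ℕ) (hc : 1 ≤ c) (lam mu1 mu2 : ℝ)
    (hlam : 0 < lam) (hmu1 : 0 < mu1) (hmu2 : 0 < mu2)
    (hne1 : lam ≠ (c : ℝ) * mu1) (hne2 : lam ≠ (c : ℝ) * (mu1 - mu2)) :
    Function.Injective (fun j : Fin (2 * c) =>
      if (j : ℕ) < c then
        (lam - (((j : ℕ) : ℝ) + 1) * mu1 - ((c - 1 - (j : ℕ) : ℕ) : ℝ) * mu2) / 2
          - Real.sqrt ((lam - (((j : ℕ) : ℝ) + 1) * mu1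
              - ((c - 1 - (j : ℕ) : ℕ) : ℝ) * mu2) ^ 2
            + 4 * ((c - 1 - (j : ℕ) : ℕ) : ℝ) * lam * mu2) / 2
      else
        (lam - ((((j : ℕ) - c : ℕ) : ℝ) + 1) * mu1
            - ((c - 1 - ((j : ℕ) - c) : ℕ) : ℝ) * mu2) / 2
          + Real.sqrt ((lam - ((((j : ℕ) - c : ℕ) : ℝ) + 1) * mu1
              - ((c - 1 - ((j : ℕ) - c) : ℕ) : ℝ) * mu2) ^ 2
            + 4 * ((c - 1 - ((j : ℕ) - c) : ℕ) : ℝ) * lam * mu2) / 2) := by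
  intro j j' h
  simp only at h
  have hj2 : (j : ℕ) < 2 * c := j.isLt
  have hj'2 : (j' : ℕ) < 2 * c := j'.isLt
  split_ifs at h with h1 h2 h2
  · -- both minus roots
    by_cases hij : (j : ℕ) = (j' : ℕ)
    · exact Fin.ext hij
    · exfalso
      have e1 := root_minus (lam - (((j : ℕ) : ℝ) + 1) * mu1
          - ((c - 1 - (j : ℕ) : ℕ) : ℝ) * mu2) ((c - 1 - (j : ℕ) : ℕ) : ℝ) lam mu2
          (by positivity) hlam.le hmu2.le
      have e2 := root_minus (lam - (((j' : ℕ) : ℝ) + 1) * mu1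
          - ((c - 1 - (j' : ℕ) : ℕ) : ℝ) * mu2) ((c - 1 - (j' : ℕ) : ℕ) : ℝ) lam mu2
          (by positivity) hlam.le hmu2.le
      rw [h] at e1
      exact diff_roots c lam mu1 mu2 hlam hmu1 hmu2 hne2 (j : ℕ) (j' : ℕ) h1 h2 hij _ e1 e2
  · -- minus root = plus root
    exfalso
    have hi' : (j' : ℕ) - c < c := by omega
    by_cases hij : (j : ℕ) = (j' : ℕ) - c
    · rw [hij] at h
      exact same_roots c lam mu1 mu2 hlam hmu1 hmu2 hne1 _ hi' h
    · have e1 := root_minus (lam - (((j : ℕ) : ℝ) + 1) * mu1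
          - ((c - 1 - (j : ℕ) : ℕ) : ℝ) * mu2) ((c - 1 - (j : ℕ) : ℕ) : ℝ) lam mu2
          (by positivity) hlam.le hmu2.le
      have e2 := root_plus (lam - ((((j' : ℕ) - c : ℕ) : ℝ) + 1) * mu1
          - ((c - 1 - ((j' : ℕ) - c) : ℕ) : ℝ) * mu2) ((c - 1 - ((j' : ℕ) - c) : ℕ) : ℝ)
          lam mu2 (by positivity) hlam.le hmu2.le
      rw [h] at e1
      exact diff_roots c lam mu1 mu2 hlam hmu1 hmu2 hne2 (j : ℕ) ((j' : ℕ) - c) h1 hi' hij _ e1 e2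
  · -- plus root = minus root
    exfalso
    have hi : (j : ℕ) - c < c := by omega
    by_cases hij : (j : ℕ) - c = (j' : ℕ)
    · rw [hij] at h
      exact same_roots c lam mu1 mu2 hlam hmu1 hmu2 hne1 _ h2 h.symm
    · have e1 := root_plus (lam - ((((j : ℕ) - c : ℕ) : ℝ) + 1) * mu1
          - ((c - 1 - ((j : ℕ) - c) : ℕ) : ℝ) * mu2) ((c - 1 - ((j : ℕ) - c) : ℕ) : ℝ)
          lam mu2 (by positivity) hlam.le hmu2.le
      have e2 := root_minus (lam - (((j' : ℕ) : ℝ) + 1) * mu1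
          - ((c - 1 - (j' : ℕ) : ℕ) : ℝ) * mu2) ((c - 1 - (j' : ℕ) : ℕ) : ℝ) lam mu2
          (by positivity) hlam.le hmu2.le
      rw [h] at e1
      exact diff_roots c lam mu1 mu2 hlam hmu1 hmu2 hne2 ((j : ℕ) - c) (j' : ℕ) hi h2 hij _ e1 e2
  · -- both plus roots
    have hi : (j : ℕ) - c < c := by omega
    have hi' : (j' : ℕ) - c < c := by omega
    by_cases hij : (j : ℕ) - c = (j' : ℕ) - c
    · exact Fin.ext (by omega)
    · exfalso
      have e1 := root_plus (lam - ((((j : ℕ) - c : ℕ) : ℝ) + 1) * mu1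
          - ((c - 1 - ((j : ℕ) - c) : ℕ) : ℝ) * mu2) ((c - 1 - ((j : ℕ) - c) : ℕ) : ℝ)
          lam mu2 (by positivity) hlam.le hmu2.le
      have e2 := root_plus (lam - ((((j' : ℕ) - c : ℕ) : ℝ) + 1) * mu1
          - ((c - 1 - ((j' : ℕ) - c) : ℕ) : ℝ) * mu2) ((c - 1 - ((j' : ℕ) - c) : ℕ) : ℝ)
          lam mu2 (by positivity) hlam.le hmu2.le
      rw [h] at e1
      exact diff_roots c lam mu1 mu2 hlam hmu1 hmu2 hne2 ((j : ℕ) - c) ((j' : ℕ) - c) hi hi' hij _ e1 e2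
end

section
/- Let B₁ be the c×c upper bidiagonal matrix with B₁(i,i) = (i+1)μ₁ for 0 ≤ i ≤ c-1 and B₁(i,i+1) = (c-i-1)μ₂ for 0 ≤ i < c-1 (zero elsewhere), and let Δ_{c-1} = diag(jμ₁ + (c-1-j)μ₂, 0 ≤ j ≤ c-1). Define D̃₁ = μ₁ I + B₁⁻¹ Δ_{c-1} B₁. Then the row vector φ* = (0, …, 0, 1) of length c satisfies φ*(B₁ - D̃₁) = 0, i.e., φ* is a left eigenvector of B₁ - D̃₁ with eigenvalue 0. -/
/-!
Since `B₁` is upper triangular and `Δ` diagonal, the last coordinate covector `φ*` is a common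
left eigenvector: `φ* B₁ = c μ₁ φ*` and `φ* Δ = (c - 1) μ₁ φ*`. Hence
`φ* B₁⁻¹ Δ B₁ = (c - 1) μ₁ φ*`, and `φ* (B₁ - D̃₁) = (c μ₁ - μ₁ - (c - 1) μ₁) φ* = 0`.
-/

open Matrix

namespace Matrix

theorem single_top_vecMul_of_isUpperTriangular {m R : Type*} [Fintype m] [DecidableEq m]
    [LinearOrder m] [OrderTop m] [Semiring R] {M : Matrix m m R} (hM : M.IsUpperTriangular) :
    Pi.single ⊤ 1 ᵥ* M = M ⊤ ⊤ • Pi.single ⊤ 1 := by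
  ext j
  rcases eq_or_ne j ⊤ with rfl | hj
  · simp
  · simp [hM (lt_top_iff_ne_top.mpr hj), hj]

variable {m K : Type*} [Fintype m] [DecidableEq m] [Field K]

theorem vecMul_nonsing_inv_mul_mul_of_vecMul_eq_smul {M N : Matrix m m K} {v : m → K} {a d : K}
    (hM : IsUnit M.det) (ha : a ≠ 0) (hvM : v ᵥ* M = a • v) (hvN : v ᵥ* N = d • v) :
    v ᵥ* (M⁻¹ * N * M) = d • v := by
  have hvM_inv : v ᵥ* M⁻¹ = a⁻¹ • v := by
    have hv : v = a • v ᵥ* M⁻¹ := by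
      rw [← smul_vecMul, ← hvM, vecMul_vecMul, mul_nonsing_inv _ hM, vecMul_one]
    conv_rhs => rw [hv, smul_smul, inv_mul_cancel₀ ha, one_smul]
  rw [← vecMul_vecMul, ← vecMul_vecMul, hvM_inv, smul_vecMul, hvN, smul_vecMul, smul_vecMul, hvM,
    smul_smul, smul_smul, mul_comm _ a, ← mul_assoc, mul_inv_cancel₀ ha, one_mul]

end Matrix

theorem stmt_5_general (c : ℕ) (hc : 1 ≤ c) (mu1 mu2 : ℝ) (hmu1 : 0 < mu1)
    (B1 : Matrix (Fin c) (Fin c) ℝ)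
    (hB1 : B1 = Matrix.of fun (i j : Fin c) =>
      if (j : ℕ) = (i : ℕ) then ((i : ℕ) + 1 : ℝ) * mu1
      else if (j : ℕ) = (i : ℕ) + 1 then ((c - 1 - (i : ℕ) : ℕ) : ℝ) * mu2
      else 0)
    (Δ : Matrix (Fin c) (Fin c) ℝ)
    (hΔ : Δ = Matrix.diagonal fun j : Fin c =>
      ((j : ℕ) : ℝ) * mu1 + ((c - 1 - (j : ℕ) : ℕ) : ℝ) * mu2)
    (D1 : Matrix (Fin c) (Fin c) ℝ)
    (hD1 : D1 = mu1 • (1 : Matrix (Fin c) (Fin c) ℝ) + B1⁻¹ * Δ * B1)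
    (φ : Fin c → ℝ) (hφ : φ = fun j : Fin c => if (j : ℕ) = c - 1 then 1 else 0) :
    φ ᵥ* (B1 - D1) = 0 := by
  obtain ⟨n, rfl⟩ := Nat.exists_eq_add_of_le' hc
  have hφ_single : φ = Pi.single ⊤ 1 := by
    ext j
    simp [hφ, Pi.single_apply, Fin.ext_iff]
  have hB1_upper : B1.IsUpperTriangular := by
    intro i j (hji : (j : ℕ) < i)
    simp [hB1, hji.ne, (hji.trans (Nat.lt_succ_self _)).ne]
  have hB1_diag (i : Fin (n + 1)) : B1 i i = ((i : ℕ) + 1) * mu1 := by simp [hB1]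
  have hB1_det : IsUnit B1.det := by
    rw [det_of_isUpperTriangular hB1_upper]
    exact (Finset.prod_ne_zero_iff.mpr fun i _ => by rw [hB1_diag]; positivity).isUnit
  have hφB1 : φ ᵥ* B1 = ((n + 1) * mu1) • φ := by
    simp [hφ_single, single_top_vecMul_of_isUpperTriangular hB1_upper, hB1_diag]
  have hφΔ : φ ᵥ* Δ = (n * mu1) • φ := by
    simp [hφ_single, hΔ, ← Pi.single_smul']
  rw [hD1, vecMul_sub, vecMul_add, vecMul_smul, vecMul_one,
    vecMul_nonsing_inv_mul_mul_of_vecMul_eq_smul hB1_det (by positivity) hφB1 hφΔ, hφB1]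
  module

/-- φ* = (0,…,0,1) is a left null vector of B₁ - D̃₁,
where D̃₁ = μ₁ I + B₁⁻¹ Δ_{c-1} B₁. -/
theorem stmt_5 (c : ℕ) (hc : 1 ≤ c) (mu1 mu2 : ℝ) (hmu1 : 0 < mu1) (hmu2 : 0 < mu2)
    (B1 : Matrix (Fin c) (Fin c) ℝ)
    (hB1 : B1 = Matrix.of fun (i j : Fin c) =>
      if (j : ℕ) = (i : ℕ) then ((i : ℕ) + 1 : ℝ) * mu1
      else if (j : ℕ) = (i : ℕ) + 1 then ((c - 1 - (i : ℕ) : ℕ) : ℝ) * mu2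
      else 0)
    (Δ : Matrix (Fin c) (Fin c) ℝ)
    (hΔ : Δ = Matrix.diagonal fun j : Fin c =>
      ((j : ℕ) : ℝ) * mu1 + ((c - 1 - (j : ℕ) : ℕ) : ℝ) * mu2)
    (D1 : Matrix (Fin c) (Fin c) ℝ)
    (hD1 : D1 = mu1 • (1 : Matrix (Fin c) (Fin c) ℝ) + B1⁻¹ * Δ * B1)
    (φ : Fin c → ℝ) (hφ : φ = fun j : Fin c => if (j : ℕ) = c - 1 then 1 else 0) :
    φ ᵥ* (B1 - D1) = 0 :=
  stmt_5_general c hc mu1 mu2 hmu1 B1 hB1 Δ hΔ D1 hD1 φ hφ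
end

section
/- Let B₂ be the c×c lower bidiagonal matrix with B₂(i,i) = (c-i)μ₂ for 0 ≤ i ≤ c-1 and B₂(i,i-1) = iμ₁ for 1 ≤ i ≤ c-1 (zero elsewhere), Δ_{c-1} = diag(jμ₁ + (c-1-j)μ₂, 0 ≤ j ≤ c-1), and D̃₂ = μ₂ I + B₂⁻¹ Δ_{c-1} B₂. Then the row vector ψ_c = (1, 0, …, 0) of length c satisfies ψ_c(B₂ - D̃₂) = 0. -/
open Matrix

/-- ψ_c = (1,0,…,0) is a left null vector of B₂ - D̃₂,
where D̃₂ = μ₂ I + B₂⁻¹ Δ_{c-1} B₂. -/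
theorem stmt_6 (c : ℕ) (hc : 1 ≤ c) (mu1 mu2 : ℝ) (hmu1 : 0 < mu1) (hmu2 : 0 < mu2)
    (B2 : Matrix (Fin c) (Fin c) ℝ)
    (hB2 : B2 = Matrix.of fun (i j : Fin c) =>
      if (j : ℕ) = (i : ℕ) then ((c - (i : ℕ) : ℕ) : ℝ) * mu2
      else if (j : ℕ) + 1 = (i : ℕ) then ((i : ℕ) : ℝ) * mu1
      else 0)
    (Δ : Matrix (Fin c) (Fin c) ℝ)
    (hΔ : Δ = Matrix.diagonal fun j : Fin c =>
      ((j : ℕ) : ℝ) * mu1 + ((c - 1 - (j : ℕ) : ℕ) : ℝ) * mu2)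
    (D2 : Matrix (Fin c) (Fin c) ℝ)
    (hD2 : D2 = mu2 • (1 : Matrix (Fin c) (Fin c) ℝ) + B2⁻¹ * Δ * B2)
    (ψ : Fin c → ℝ) (hψ : ψ = fun j : Fin c => if (j : ℕ) = 0 then 1 else 0) :
    ψ ᵥ* (B2 - D2) = 0 := by
  haveI : NeZero c := ⟨by omega⟩
  -- B2 is invertible
  have hdet : IsUnit B2.det := by
    have htri : B2.BlockTriangular OrderDual.toDual := by
      intro i j hij
      have hij' : (i : ℕ) < (j : ℕ) := hij
      rw [hB2]
      simp only [Matrix.of_apply]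
      rw [if_neg (by omega), if_neg (by omega)]
    rw [Matrix.det_of_lowerTriangular B2 htri]
    refine (Finset.prod_ne_zero_iff.mpr fun i _ => ?_).isUnit
    have : (0 : ℕ) < c - (i : ℕ) := by omega
    have h0 : (0 : ℝ) < ((c - (i : ℕ) : ℕ) : ℝ) := by exact_mod_cast this
    rw [hB2]
    simp only [Matrix.of_apply, if_pos rfl]
    exact mul_ne_zero (ne_of_gt h0) (ne_of_gt hmu2)
  have hBB : B2 * B2⁻¹ = 1 := Matrix.mul_nonsing_inv B2 hdet
  -- ψ ᵥ* B2 = (c * mu2) • ψ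
  have h1 : ψ ᵥ* B2 = ((c : ℝ) * mu2) • ψ := by
    ext j
    simp only [hψ, hB2, Matrix.vecMul, dotProduct, Pi.smul_apply, smul_eq_mul]
    rw [Finset.sum_eq_single (0 : Fin c)]
    · by_cases hj : (j : ℕ) = 0 <;> simp [hj] <;> omega
    · intro b _ hb
      have : (b : ℕ) ≠ 0 := fun h => hb (Fin.ext (by simp [h]))
      simp [this]
    · simp
  -- ψ ᵥ* Δ = ((c-1) * mu2) • ψ
  have h2 : ψ ᵥ* Δ = (((c - 1 : ℕ) : ℝ) * mu2) • ψ := by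
    ext j
    simp only [hψ, hΔ, Matrix.vecMul, dotProduct, Pi.smul_apply, smul_eq_mul,
      Matrix.diagonal_apply]
    rw [Finset.sum_eq_single (0 : Fin c)]
    · by_cases hj : (j : ℕ) = 0
      · have : j = 0 := Fin.ext (by simpa using hj)
        simp [this, hj]
        try ring
      · have : j ≠ 0 := fun h => hj (by simp [h])
        simp [hj, Ne.symm this]
    · intro b _ hb
      have : (b : ℕ) ≠ 0 := fun h => hb (Fin.ext (by simp [h]))
      simp [this]
    · simp
  have hcmu : (c : ℝ) * mu2 ≠ 0 := by positivity
  -- ψ ᵥ* B2⁻¹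
  have h3 : ψ ᵥ* B2⁻¹ = (((c : ℝ) * mu2)⁻¹) • ψ := by
    have h := congrArg (fun v => v ᵥ* B2⁻¹) h1
    simp only [Matrix.vecMul_vecMul, hBB, Matrix.vecMul_one] at h
    conv_rhs => rw [h]
    rw [Matrix.smul_vecMul, smul_smul, inv_mul_cancel₀ hcmu, one_smul]
  have hsm : ψ ᵥ* (mu2 • (1 : Matrix (Fin c) (Fin c) ℝ)) = mu2 • ψ := by
    ext j
    simp [Matrix.vecMul, dotProduct, Matrix.one_apply, mul_comm, Finset.sum_ite_eq]
  have h4 : ψ ᵥ* D2 = (mu2 + ((c - 1 : ℕ) : ℝ) * mu2) • ψ := by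
    rw [hD2, Matrix.vecMul_add, hsm, add_smul]
    congr 1
    rw [← Matrix.vecMul_vecMul, ← Matrix.vecMul_vecMul, h3, Matrix.smul_vecMul, h2,
      Matrix.smul_vecMul, Matrix.smul_vecMul, h1, smul_smul, smul_smul]
    congr 1
    field_simp
    try ring
  rw [Matrix.vecMul_sub, h1, h4, ← sub_smul]
  have : ((c : ℝ) * mu2) - (mu2 + ((c - 1 : ℕ) : ℝ) * mu2) = 0 := by
    rw [Nat.cast_sub hc]
    push_cast
    ring
  rw [this, zero_smul]
end

section
/- Let D̃₁ = μ₁I + B₁⁻¹Δ_{c-1}B₁ and D̃₂ = μ₂I + B₂⁻¹Δ_{c-1}B₂, let φ̃* be a right eigenvector with (B₁ - D̃₁)φ̃* = 0 and ψ̃_c a right eigenvector with (B₂ - D̃₂)ψ̃_c = 0. Then (B₁ D̃₁⁻¹ D̃₂ - B₂) ψ̃_c = 0, i.e., the column vector D̃₁⁻¹ D̃₂ ψ̃_c is a right null vector of B₁ - D̃₁. -/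
open Matrix

/-!
Write `Eᵢ = μᵢ I + Δ`. Since `D̃ᵢ` is conjugate to `Eᵢ`, `Bᵢ D̃ᵢ = Eᵢ Bᵢ`. If `(B₂ - D̃₂) ψ = 0`,
then `w = B₂ ψ = D̃₂ ψ` satisfies `B₂ w = B₂ D̃₂ ψ = E₂ w`. For the bidiagonal matrices at hand
`B₁ - E₁ = S (B₂ - E₂)` with `S` supported on the superdiagonal, so also `B₁ w = E₁ w`, and then
`B₁ D̃₁⁻¹ D̃₂ ψ = B₁ D̃₁⁻¹ w = E₁⁻¹ B₁ w = w = B₂ ψ`.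
-/

/- Entries are functions of the `ℕ`-index, so that shifted entries such as `b (i + 1)` need no
bound proof. -/
def upperBidiagonal {R : Type*} [Zero R] (n : ℕ) (d u : ℕ → R) : Matrix (Fin n) (Fin n) R :=
  of fun i j => if (j : ℕ) = i then d i else if (j : ℕ) = i + 1 then u i else 0

def lowerBidiagonal {R : Type*} [Zero R] (n : ℕ) (d l : ℕ → R) : Matrix (Fin n) (Fin n) R :=
  of fun i j => if (j : ℕ) = i then d i else if (j : ℕ) + 1 = i then l i else 0

section Bidiagonal

variable {R : Type*} [CommRing R] {n : ℕ}

theorem det_upperBidiagonal (d u : ℕ → R) :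
    (upperBidiagonal n d u).det = ∏ i : Fin n, d i := by
  rw [det_of_isUpperTriangular]
  · simp [upperBidiagonal]
  · intro i j hij
    have : ¬(j : ℕ) = i ∧ ¬(j : ℕ) = i + 1 := by simp only [id] at hij; omega
    simp [upperBidiagonal, this]

theorem det_lowerBidiagonal (d l : ℕ → R) :
    (lowerBidiagonal n d l).det = ∏ i : Fin n, d i := by
  rw [det_of_isLowerTriangular]
  · simp [lowerBidiagonal]
  · intro i j hij
    have : ¬(j : ℕ) = i ∧ ¬(j : ℕ) + 1 = i := by
      change (i : ℕ) < j at hij; omega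
    simp [lowerBidiagonal, this]

theorem upperBidiagonal_zero_mul_apply (s : ℕ → R) (M : Matrix (Fin n) (Fin n) R)
    (i j : Fin n) :
    (upperBidiagonal n 0 s * M) i j =
      if h : (i : ℕ) + 1 < n then s i * M ⟨i + 1, h⟩ j else 0 := by
  rw [mul_apply]
  split_ifs with h
  · rw [Finset.sum_eq_single ⟨i + 1, h⟩]
    · simp [upperBidiagonal]
    · intro k _ hk
      have : (k : ℕ) ≠ i + 1 := fun e => hk (Fin.ext e)
      simp [upperBidiagonal, this]
    · simp
  · refine Finset.sum_eq_zero fun k _ => ?_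
    have : (k : ℕ) ≠ i + 1 := by omega
    simp [upperBidiagonal, this]

end Bidiagonal

section DifferenceBidiagonal

variable {K : Type*} [Field K] {n : ℕ} (a b : ℕ → K)

theorem upperBidiagonal_neg_eq_mul_lowerBidiagonal_neg (ha : a (n - 1) = 0)
    (hb : ∀ i, b (i + 1) ≠ 0) :
    upperBidiagonal n (fun i => -a i) a =
      upperBidiagonal n 0 (fun i => -a i / b (i + 1)) * lowerBidiagonal n (fun i => -b i) b := by
  ext i j
  rw [upperBidiagonal_zero_mul_apply]
  split_ifs with h
  · simp only [upperBidiagonal, lowerBidiagonal, of_apply]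
    split_ifs <;> first | omega | simp [hb]
  · have hi : (i : ℕ) = n - 1 := by omega
    simp [upperBidiagonal, hi, ha]

theorem upperBidiagonal_neg_mulVec_eq_zero (ha : a (n - 1) = 0) (hb : ∀ i, b (i + 1) ≠ 0)
    {v : Fin n → K} (hv : lowerBidiagonal n (fun i => -b i) b *ᵥ v = 0) :
    upperBidiagonal n (fun i => -a i) a *ᵥ v = 0 := by
  rw [upperBidiagonal_neg_eq_mul_lowerBidiagonal_neg a b ha hb, ← mulVec_mulVec, hv, mulVec_zero]

end DifferenceBidiagonal

section Intertwining

variable {n R : Type*} [Fintype n] [DecidableEq n] [CommRing R]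

theorem mul_smul_one_add_conj (a : R) {B : Matrix n n R} (Δ : Matrix n n R) (hB : IsUnit B.det) :
    B * (a • 1 + B⁻¹ * Δ * B) = (a • 1 + Δ) * B := by
  rw [Matrix.mul_add, Matrix.add_mul, Matrix.mul_assoc B⁻¹, mul_nonsing_inv_cancel_left _ _ hB,
    Matrix.mul_smul, Matrix.smul_mul, Matrix.mul_one, Matrix.one_mul]

variable {B D E : Matrix n n R}

theorem isUnit_det_of_mul_eq_mul (hB : IsUnit B.det) (hE : IsUnit E.det) (h : B * D = E * B) :
    IsUnit D.det := by
  have hdet := congrArg det h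
  rw [det_mul, det_mul, mul_comm E.det] at hdet
  exact hB.mul_left_cancel hdet ▸ hE

theorem mul_nonsing_inv_eq_of_mul_eq_mul (hD : IsUnit D.det) (hE : IsUnit E.det)
    (h : B * D = E * B) : B * D⁻¹ = E⁻¹ * B := by
  calc B * D⁻¹ = E⁻¹ * (E * B) * D⁻¹ := by rw [nonsing_inv_mul_cancel_left _ _ hE]
    _ = E⁻¹ * B := by rw [← h, Matrix.mul_assoc, mul_nonsing_inv_cancel_right _ _ hD]

theorem mul_nonsing_inv_mul_mulVec_eq {B₁ B₂ D₁ D₂ E₁ E₂ : Matrix n n R}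
    (hD₁ : IsUnit D₁.det) (hE₁ : IsUnit E₁.det) (h₁ : B₁ * D₁ = E₁ * B₁)
    (h₂ : B₂ * D₂ = E₂ * B₂) (hker : ∀ v, (B₂ - E₂) *ᵥ v = 0 → (B₁ - E₁) *ᵥ v = 0)
    {ψ : n → R} (hψ : (B₂ - D₂) *ᵥ ψ = 0) : (B₁ * D₁⁻¹ * D₂) *ᵥ ψ = B₂ *ᵥ ψ := by
  set w := B₂ *ᵥ ψ
  have hD₂ψ : D₂ *ᵥ ψ = w := (sub_eq_zero.mp (by rwa [sub_mulVec] at hψ)).symm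
  have hB₂w : (B₂ - E₂) *ᵥ w = 0 := by
    rw [sub_mulVec, sub_eq_zero, ← hD₂ψ, mulVec_mulVec, h₂, ← mulVec_mulVec, hD₂ψ]
  have hB₁w : B₁ *ᵥ w = E₁ *ᵥ w := by
    rw [← sub_eq_zero, ← sub_mulVec, hker w hB₂w]
  rw [← mulVec_mulVec, hD₂ψ, mul_nonsing_inv_eq_of_mul_eq_mul hD₁ hE₁ h₁, ← mulVec_mulVec, hB₁w,
    mulVec_mulVec, nonsing_inv_mul _ hE₁, one_mulVec]

end Intertwining

theorem isUnit_det_smul_one_add_diagonal {n K : Type*} [Fintype n] [DecidableEq n] [Field K]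
    [LinearOrder K] [IsStrictOrderedRing K] {a : K} (ha : 0 < a) {f : n → K}
    (hf : ∀ j, 0 ≤ f j) : IsUnit (a • (1 : Matrix n n K) + diagonal f).det := by
  rw [smul_one_eq_diagonal, diagonal_add, det_diagonal, isUnit_iff_ne_zero]
  exact Finset.prod_ne_zero_iff.2 fun j _ => (add_pos_of_pos_of_nonneg ha (hf j)).ne'

section Model

variable (c : ℕ) (μ₁ μ₂ : ℝ)

theorem upperBidiagonal_sub_smul_one_add_diagonal :
    upperBidiagonal c (fun i => (i + 1 : ℝ) * μ₁) (fun i => ((c - i - 1 : ℕ) : ℝ) * μ₂) -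
        (μ₁ • 1 + diagonal fun j : Fin c => (j : ℝ) * μ₁ + ((c - 1 - j : ℕ) : ℝ) * μ₂) =
      upperBidiagonal c (fun i => -(((c - 1 - i : ℕ) : ℝ) * μ₂))
        (fun i => ((c - 1 - i : ℕ) : ℝ) * μ₂) := by
  ext i j
  simp only [Nat.sub_right_comm c _ 1]
  by_cases h : j = i
  · subst h; simp [upperBidiagonal]; ring
  · have : (j : ℕ) ≠ i := fun e => h (Fin.ext e)
    simp [upperBidiagonal, Ne.symm h, this]

theorem lowerBidiagonal_sub_smul_one_add_diagonal :
    lowerBidiagonal c (fun i => ((c - i : ℕ) : ℝ) * μ₂) (fun i => i * μ₁) -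
        (μ₂ • 1 + diagonal fun j : Fin c => (j : ℝ) * μ₁ + ((c - 1 - j : ℕ) : ℝ) * μ₂) =
      lowerBidiagonal c (fun i => -(i * μ₁)) (fun i => i * μ₁) := by
  ext i j
  by_cases h : j = i
  · subst h
    have := j.isLt
    have : ((c - 1 - j : ℕ) : ℝ) = c - j - 1 := by
      rw [Nat.cast_sub (by omega), Nat.cast_pred (by omega)]; ring
    simp [lowerBidiagonal, this]; ring
  · have : (j : ℕ) ≠ i := fun e => h (Fin.ext e)
    simp [lowerBidiagonal, Ne.symm h, this]

end Model

theorem stmt_9_general (c : ℕ) (mu1 mu2 : ℝ) (hmu1 : 0 < mu1) (hmu2 : 0 < mu2)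
    (B1 B2 Δ : Matrix (Fin c) (Fin c) ℝ)
    (hB1 : B1 = Matrix.of fun (i j : Fin c) =>
      if (j : ℕ) = (i : ℕ) then ((i : ℕ) + 1 : ℝ) * mu1
      else if (j : ℕ) = (i : ℕ) + 1 then ((c - (i : ℕ) - 1 : ℕ) : ℝ) * mu2
      else 0)
    (hB2 : B2 = Matrix.of fun (i j : Fin c) =>
      if (j : ℕ) = (i : ℕ) then ((c - (i : ℕ) : ℕ) : ℝ) * mu2
      else if (j : ℕ) + 1 = (i : ℕ) then ((i : ℕ) : ℝ) * mu1
      else 0)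
    (hΔ : Δ = Matrix.diagonal fun j : Fin c =>
      ((j : ℕ) : ℝ) * mu1 + ((c - 1 - (j : ℕ) : ℕ) : ℝ) * mu2)
    (D1 D2 : Matrix (Fin c) (Fin c) ℝ)
    (hD1 : D1 = mu1 • (1 : Matrix (Fin c) (Fin c) ℝ) + B1⁻¹ * Δ * B1)
    (hD2 : D2 = mu2 • (1 : Matrix (Fin c) (Fin c) ℝ) + B2⁻¹ * Δ * B2)
    (ψ : Fin c → ℝ)
    (hψ : (B2 - D2) *ᵥ ψ = 0) :
    (B1 * D1⁻¹ * D2 - B2) *ᵥ ψ = 0 ∧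
      (B1 - D1) *ᵥ ((D1⁻¹ * D2) *ᵥ ψ) = 0 := by
  replace hB1 : B1 = upperBidiagonal c (fun i => (i + 1 : ℝ) * mu1)
      (fun i => ((c - i - 1 : ℕ) : ℝ) * mu2) := hB1
  replace hB2 : B2 = lowerBidiagonal c (fun i => ((c - i : ℕ) : ℝ) * mu2) (fun i => i * mu1) := hB2
  have hB1u : IsUnit B1.det := by
    rw [hB1, det_upperBidiagonal, isUnit_iff_ne_zero]
    exact Finset.prod_ne_zero_iff.2 fun i _ => by positivity
  have hB2u : IsUnit B2.det := by
    rw [hB2, det_lowerBidiagonal, isUnit_iff_ne_zero]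
    exact Finset.prod_ne_zero_iff.2 fun i _ => by have := Nat.sub_pos_of_lt i.isLt; positivity
  have hE1u : IsUnit (mu1 • 1 + Δ).det :=
    hΔ ▸ isUnit_det_smul_one_add_diagonal hmu1 fun j => by positivity
  have h₁ : B1 * D1 = (mu1 • 1 + Δ) * B1 := hD1 ▸ mul_smul_one_add_conj mu1 Δ hB1u
  have h₂ : B2 * D2 = (mu2 • 1 + Δ) * B2 := hD2 ▸ mul_smul_one_add_conj mu2 Δ hB2u
  have hD1u := isUnit_det_of_mul_eq_mul hB1u hE1u h₁
  have hker : ∀ v, (B2 - (mu2 • 1 + Δ)) *ᵥ v = 0 → (B1 - (mu1 • 1 + Δ)) *ᵥ v = 0 := by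
    rw [hB1, hB2, hΔ, upperBidiagonal_sub_smul_one_add_diagonal,
      lowerBidiagonal_sub_smul_one_add_diagonal]
    exact fun v => upperBidiagonal_neg_mulVec_eq_zero _ _ (by simp) fun i => by positivity
  have hB₂ψ := mul_nonsing_inv_mul_mulVec_eq hD1u hE1u h₁ h₂ hker hψ
  refine ⟨by rw [sub_mulVec, hB₂ψ, sub_self], ?_⟩
  rw [sub_mulVec, mulVec_mulVec, mulVec_mulVec, ← Matrix.mul_assoc, hB₂ψ,
    mul_nonsing_inv_cancel_left _ _ hD1u, ← sub_mulVec, hψ]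

/-- if (B₁ - D̃₁)φ̃* = 0 and (B₂ - D̃₂)ψ̃_c = 0, then
(B₁D̃₁⁻¹D̃₂ - B₂)ψ̃_c = 0, i.e. D̃₁⁻¹D̃₂ψ̃_c is a right null vector of B₁ - D̃₁. -/
theorem stmt_9 (c : ℕ) (hc : 2 ≤ c) (mu1 mu2 : ℝ) (hmu1 : 0 < mu1) (hmu2 : 0 < mu2)
    (B1 B2 Δ : Matrix (Fin c) (Fin c) ℝ)
    (hB1 : B1 = Matrix.of fun (i j : Fin c) =>
      if (j : ℕ) = (i : ℕ) then ((i : ℕ) + 1 : ℝ) * mu1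
      else if (j : ℕ) = (i : ℕ) + 1 then ((c - (i : ℕ) - 1 : ℕ) : ℝ) * mu2
      else 0)
    (hB2 : B2 = Matrix.of fun (i j : Fin c) =>
      if (j : ℕ) = (i : ℕ) then ((c - (i : ℕ) : ℕ) : ℝ) * mu2
      else if (j : ℕ) + 1 = (i : ℕ) then ((i : ℕ) : ℝ) * mu1
      else 0)
    (hΔ : Δ = Matrix.diagonal fun j : Fin c =>
      ((j : ℕ) : ℝ) * mu1 + ((c - 1 - (j : ℕ) : ℕ) : ℝ) * mu2)
    (D1 D2 : Matrix (Fin c) (Fin c) ℝ)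
    (hD1 : D1 = mu1 • (1 : Matrix (Fin c) (Fin c) ℝ) + B1⁻¹ * Δ * B1)
    (hD2 : D2 = mu2 • (1 : Matrix (Fin c) (Fin c) ℝ) + B2⁻¹ * Δ * B2)
    (φ ψ : Fin c → ℝ)
    (hφ : (B1 - D1) *ᵥ φ = 0) (hψ : (B2 - D2) *ᵥ ψ = 0) :
    (B1 * D1⁻¹ * D2 - B2) *ᵥ ψ = 0 ∧
      (B1 - D1) *ᵥ ((D1⁻¹ * D2) *ᵥ ψ) = 0 :=
  stmt_9_general c mu1 mu2 hmu1 hmu2 B1 B2 Δ hB1 hB2 hΔ D1 D2 hD1 hD2 ψ hψ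
end

section
/- For a single-server queue (c = 1) with λ, μ₁, μ₂ > 0, λ < μ₂, λ ≠ μ₁, and μ₂ - μ₁ ≠ λ, the function F'(x) = λπ₀e^{-(μ₁-λ)x} on (0,k) satisfies the level-crossing integro-differential equation F'(x) + λπ₀(1 - e^{-μ₁x}) = λ∫₀ˣ e^{-μ₁(x-y)}F'(y)dy + F'(0) for all 0 < x < k, where π₀ > 0 is arbitrary and F'(0) = λπ₀. -/
/-- for c = 1, F'(x) = λπ₀e^{-(μ₁-λ)x} satisfies the level-crossing
integro-differential equation on (0,k). -/
theorem stmt_10 (lam mu1 mu2 k p : ℝ)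
    (hlam : 0 < lam) (hmu1 : 0 < mu1) (hmu2 : 0 < mu2) (hk : 0 < k) (hp : 0 < p)
    (hstab : lam < mu2) (hne1 : lam ≠ mu1) (hne2 : mu2 - mu1 ≠ lam) :
    ∀ x : ℝ, 0 < x → x < k →
      lam * p * Real.exp (-(mu1 - lam) * x) + lam * p * (1 - Real.exp (-mu1 * x))
        = lam * (∫ y in (0 : ℝ)..x,
            Real.exp (-mu1 * (x - y)) * (lam * p * Real.exp (-(mu1 - lam) * y)))
          + lam * p := by
  intro x hx hxk
  have key : (∫ y in (0 : ℝ)..x,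
      Real.exp (-mu1 * (x - y)) * (lam * p * Real.exp (-(mu1 - lam) * y)))
      = lam * p * Real.exp (-mu1 * x) * ∫ y in (0 : ℝ)..x, Real.exp (lam * y) := by
    rw [← intervalIntegral.integral_const_mul]
    apply intervalIntegral.integral_congr
    intro y _
    have h : Real.exp (-mu1 * (x - y)) * Real.exp (-(mu1 - lam) * y)
        = Real.exp (-mu1 * x) * Real.exp (lam * y) := by
      rw [← Real.exp_add, ← Real.exp_add]; ring_nf
    simp only
    linear_combination (lam * p) * h
  have hint : (∫ y in (0 : ℝ)..x, Real.exp (lam * y))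
      = (Real.exp (lam * x) - 1) / lam := by
    rw [intervalIntegral.integral_comp_mul_left (fun u => Real.exp u) hlam.ne']
    simp [Real.exp_zero, smul_eq_mul, div_eq_inv_mul]
  rw [key, hint]
  have hexp : Real.exp (-(mu1 - lam) * x) = Real.exp (-mu1 * x) * Real.exp (lam * x) := by
    rw [← Real.exp_add]; ring_nf
  rw [hexp]
  field_simp
  ring
end

section
/- With π(0,0) = ((μ₁/λ - 1)(μ₂/λ - 1)) / ((μ₁/λ)(μ₂/λ - 1) - (μ₂/μ₁ - 1)e^{(λ-μ₁)k}), setting π₀ = π(0,0) and F'(x) = λπ₀e^{-(μ₁-λ)x} for 0 < x ≤ k and F'(x) = λπ₀e^{-(μ₁-λ)k}[(μ₂-μ₁)e^{-μ₁(x-k)} - λe^{-(μ₂-λ)(x-k)}]/(μ₂-μ₁-λ) for x > k, the total mass satisfies π₀ + ∫₀ᵏ F'(x)dx + ∫ₖ^∞ F'(x)dx = 1. -/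
open Real Set MeasureTheory intervalIntegral

lemma aux_interval (c k : ℝ) (hc : c ≠ 0) :
    ∫ x in (0:ℝ)..k, Real.exp (c * x) = (Real.exp (c * k) - 1) / c := by
  have := intervalIntegral.integral_comp_mul_left (a := (0:ℝ)) (b := k) Real.exp hc
  rw [this]
  simp [integral_exp, mul_zero, Real.exp_zero, smul_eq_mul, div_eq_inv_mul]

lemma aux_Ioi_int (b k : ℝ) (hb : 0 < b) :
    IntegrableOn (fun x : ℝ => Real.exp (-b * (x - k))) (Ioi k) := by
  have h := (exp_neg_integrableOn_Ioi k hb).const_mul (Real.exp (b * k))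
  rwa [show (fun x : ℝ => Real.exp (b * k) * Real.exp (-b * x))
      = fun x : ℝ => Real.exp (-b * (x - k)) from
    funext fun x => by rw [← Real.exp_add]; congr 1; ring] at h

lemma aux_Ioi (b k : ℝ) (hb : 0 < b) :
    ∫ x in Ioi k, Real.exp (-b * (x - k)) = 1 / b := by
  have h : ∀ x : ℝ, Real.exp (-b * (x - k)) = (fun y => Real.exp (b * k - y)) (b * x) := by
    intro x; simp only []; congr 1; ring
  simp_rw [h]
  rw [integral_comp_mul_left_Ioi (fun y => Real.exp (b * k - y)) k hb]
  simp_rw [sub_eq_add_neg, Real.exp_add, MeasureTheory.integral_const_mul,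
    integral_exp_neg_Ioi]
  rw [← Real.exp_add, add_neg_cancel, Real.exp_zero, smul_eq_mul, mul_one, one_div]

/-- with π₀ = π(0,0) as given, the total mass
π₀ + ∫₀ᵏ F'(x)dx + ∫ₖ^∞ F'(x)dx equals 1. -/
theorem stmt_13 (lam mu1 mu2 k : ℝ)
    (hlam : 0 < lam) (hmu1 : 0 < mu1) (hmu2 : 0 < mu2) (hk : 0 < k)
    (hstab : lam < mu2) (hne1 : lam ≠ mu1) (hne2 : mu2 - mu1 - lam ≠ 0)
    (p : ℝ)
    (hp : p = ((mu1 / lam - 1) * (mu2 / lam - 1))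
      / ((mu1 / lam) * (mu2 / lam - 1) - (mu2 / mu1 - 1) * Real.exp ((lam - mu1) * k)))
    (hden : (mu1 / lam) * (mu2 / lam - 1)
      - (mu2 / mu1 - 1) * Real.exp ((lam - mu1) * k) ≠ 0) :
    p + (∫ x in (0 : ℝ)..k, lam * p * Real.exp (-(mu1 - lam) * x))
      + (∫ x in Set.Ioi k, lam * p * Real.exp (-(mu1 - lam) * k) *
          ((mu2 - mu1) * Real.exp (-mu1 * (x - k))
            - lam * Real.exp (-(mu2 - lam) * (x - k))) / (mu2 - mu1 - lam)) = 1 := by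
  have hc : lam - mu1 ≠ 0 := sub_ne_zero.mpr hne1
  have hml : 0 < mu2 - lam := sub_pos.mpr hstab
  set E : ℝ := Real.exp ((lam - mu1) * k) with hE
  -- interval integral
  have h1 : (∫ x in (0 : ℝ)..k, lam * p * Real.exp (-(mu1 - lam) * x))
      = lam * p * ((E - 1) / (lam - mu1)) := by
    rw [intervalIntegral.integral_const_mul]
    have : ∀ x : ℝ, Real.exp (-(mu1 - lam) * x) = Real.exp ((lam - mu1) * x) := by
      intro x; congr 1; ring
    simp_rw [this]
    rw [aux_interval _ _ hc]
  -- Ioi integral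
  set A : ℝ := lam * p * Real.exp (-(mu1 - lam) * k) * (mu2 - mu1) / (mu2 - mu1 - lam) with hA
  set B : ℝ := -(lam * p * Real.exp (-(mu1 - lam) * k) * lam / (mu2 - mu1 - lam)) with hB
  have h2 : (∫ x in Set.Ioi k, lam * p * Real.exp (-(mu1 - lam) * k) *
          ((mu2 - mu1) * Real.exp (-mu1 * (x - k))
            - lam * Real.exp (-(mu2 - lam) * (x - k))) / (mu2 - mu1 - lam))
      = A * (1 / mu1) + B * (1 / (mu2 - lam)) := by
    have heq : ∀ x : ℝ, lam * p * Real.exp (-(mu1 - lam) * k) *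
          ((mu2 - mu1) * Real.exp (-mu1 * (x - k))
            - lam * Real.exp (-(mu2 - lam) * (x - k))) / (mu2 - mu1 - lam)
        = A * Real.exp (-mu1 * (x - k)) + B * Real.exp (-(mu2 - lam) * (x - k)) := by
      intro x; rw [hA, hB]; field_simp; ring
    simp_rw [heq]
    rw [MeasureTheory.integral_add ((aux_Ioi_int mu1 k hmu1).const_mul A)
         ((aux_Ioi_int (mu2 - lam) k hml).const_mul B),
       MeasureTheory.integral_const_mul, MeasureTheory.integral_const_mul,
       aux_Ioi _ _ hmu1, aux_Ioi _ _ hml]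
  rw [h1, h2, hA, hB]
  have hEk : Real.exp (-(mu1 - lam) * k) = E := by rw [hE]; congr 1; ring
  rw [hEk]
  have hlam' : lam ≠ 0 := hlam.ne'
  have hmu1' : mu1 ≠ 0 := hmu1.ne'
  have hml' : mu2 - lam ≠ 0 := hml.ne'
  set D : ℝ := mu1 ^ 2 * (mu2 - lam) - (mu2 - mu1) * lam ^ 2 * E with hD
  have hDval : mu1 / lam * (mu2 / lam - 1) - (mu2 / mu1 - 1) * E
      = D / (lam ^ 2 * mu1) := by rw [hD]; field_simp
  have hD0 : D ≠ 0 := by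
    intro h
    apply hden
    rw [hDval, h, zero_div]
  have hp' : p = mu1 * (mu1 - lam) * (mu2 - lam) / D := by
    rw [hp, hDval, div_div_eq_mul_div, div_eq_div_iff hD0 hD0]
    field_simp
  rw [hp']
  field_simp
  ring
end

section
/- Let U⁻ and U⁺ be c×c real matrices both solving the quadratic matrix equation U² - U(λI - D̃) + λ(B - D̃) = 0, and suppose U⁺ - U⁻ is invertible. Then the function F(x) = v(U⁺ - U⁻)⁻¹(e^{U⁺x} - e^{U⁻x}) + w(I - e^{U⁻x}), for row vectors v, w with w·λ(B - D̃) = α and v = F'(0) + wU⁻ appropriately chosen, satisfies F''(x) - F'(x)(λI - D̃) + λF(x)(B - D̃) = α for all x, and F(0) = 0. -/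
/-! Each curve `t ↦ u e^{tU}` with `U² - U S + K = 0` solves the homogeneous equation
`y'' - y' S + y K = 0`, since `e^{tU}` commutes with `U`. Expanding, `F` is such a curve for `U⁺`
minus one for `U⁻` plus the constant `w`, and a constant contributes exactly `w K = α`. -/

open Matrix

attribute [local instance] Matrix.linftyOpNormedRing Matrix.linftyOpNormedAlgebra

section
variable {𝕂 m : Type*} [RCLike 𝕂] [Fintype m] [DecidableEq m]

theorem hasDerivAt_vecMul_exp_smul (u : m → 𝕂) (U : Matrix m m 𝕂) (x : 𝕂) :
    HasDerivAt (fun t : 𝕂 => u ᵥ* NormedSpace.exp (t • U))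
      ((u ᵥ* U) ᵥ* NormedSpace.exp (x • U)) x := by
  have h := (LinearMap.toContinuousLinearMap (vecMulBilin 𝕂 𝕂 u)).hasFDerivAt.comp_hasDerivAt x
    (hasDerivAt_exp_smul_const' (𝕂 := 𝕂) U x)
  exact h.congr_deriv (vecMul_vecMul u U _).symm

theorem vecMul_exp_smul_quadratic {S K U : Matrix m m 𝕂} (hU : U * U - U * S + K = 0)
    (u : m → 𝕂) (t : 𝕂) :
    (u ᵥ* U ᵥ* U) ᵥ* NormedSpace.exp (t • U) - ((u ᵥ* U) ᵥ* NormedSpace.exp (t • U)) ᵥ* S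
      + (u ᵥ* NormedSpace.exp (t • U)) ᵥ* K = 0 := by
  have hcomm : U * NormedSpace.exp (t • U) = NormedSpace.exp (t • U) * U :=
    ((Commute.refl U).smul_right t).exp_right.eq
  have hUUE : U * U * NormedSpace.exp (t • U) = NormedSpace.exp (t • U) * (U * U) := by
    rw [mul_assoc, hcomm, ← mul_assoc, hcomm, mul_assoc]
  calc _ = u ᵥ* (NormedSpace.exp (t • U) * (U * U - U * S + K)) := by
        rw [mul_add, mul_sub, ← hUUE, ← mul_assoc, ← hcomm]
        simp only [vecMul_vecMul, vecMul_add, vecMul_sub]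
    _ = 0 := by rw [hU, mul_zero, vecMul_zero]

theorem deriv_vecMul_exp_smul_sub (a b : m → 𝕂) (U V : Matrix m m 𝕂) :
    deriv (fun t : 𝕂 => a ᵥ* NormedSpace.exp (t • U) - b ᵥ* NormedSpace.exp (t • V)) =
      fun t => (a ᵥ* U) ᵥ* NormedSpace.exp (t • U) - (b ᵥ* V) ᵥ* NormedSpace.exp (t • V) :=
  funext fun x =>
    ((hasDerivAt_vecMul_exp_smul a U x).sub (hasDerivAt_vecMul_exp_smul b V x)).deriv

end

theorem stmt_19_general (c : ℕ) (lam : ℝ) (B D Um Up : Matrix (Fin c) (Fin c) ℝ)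
    (hUm : Um * Um - Um * (lam • (1 : Matrix (Fin c) (Fin c) ℝ) - D)
      + lam • (B - D) = 0)
    (hUp : Up * Up - Up * (lam • (1 : Matrix (Fin c) (Fin c) ℝ) - D)
      + lam • (B - D) = 0)
    (v w α : Fin c → ℝ)
    (hw : w ᵥ* (lam • (B - D)) = α)
    (F : ℝ → Fin c → ℝ)
    (hF : F = fun x : ℝ =>
      v ᵥ* ((Up - Um)⁻¹ * (NormedSpace.exp (x • Up) - NormedSpace.exp (x • Um)))
        + w ᵥ* ((1 : Matrix (Fin c) (Fin c) ℝ) - NormedSpace.exp (x • Um))) :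
    (∀ x : ℝ,
      deriv (deriv F) x - (deriv F x) ᵥ* (lam • (1 : Matrix (Fin c) (Fin c) ℝ) - D)
        + lam • ((F x) ᵥ* (B - D)) = α) ∧ F 0 = 0 := by
  set S : Matrix (Fin c) (Fin c) ℝ := lam • (1 : Matrix (Fin c) (Fin c) ℝ) - D
  set K : Matrix (Fin c) (Fin c) ℝ := lam • (B - D)
  set a := v ᵥ* (Up - Um)⁻¹
  have hF_exp : F = fun x =>
      (a ᵥ* NormedSpace.exp (x • Up) - (a + w) ᵥ* NormedSpace.exp (x • Um)) + w := by
    rw [hF]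
    funext x
    simp only [← vecMul_vecMul, vecMul_sub, vecMul_one, add_vecMul]
    abel
  refine ⟨fun x => ?_, by simp [hF]⟩
  have hF' : deriv F = fun x =>
      (a ᵥ* Up) ᵥ* NormedSpace.exp (x • Up) - ((a + w) ᵥ* Um) ᵥ* NormedSpace.exp (x • Um) := by
    rw [hF_exp, deriv_add_const', deriv_vecMul_exp_smul_sub]
  rw [hF', deriv_vecMul_exp_smul_sub, hF_exp, ← vecMul_smul]
  calc _ = ((a ᵥ* Up ᵥ* Up) ᵥ* NormedSpace.exp (x • Up)
          - ((a ᵥ* Up) ᵥ* NormedSpace.exp (x • Up)) ᵥ* S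
          + (a ᵥ* NormedSpace.exp (x • Up)) ᵥ* K)
        - (((a + w) ᵥ* Um ᵥ* Um) ᵥ* NormedSpace.exp (x • Um)
          - (((a + w) ᵥ* Um) ᵥ* NormedSpace.exp (x • Um)) ᵥ* S
          + ((a + w) ᵥ* NormedSpace.exp (x • Um)) ᵥ* K)
        + w ᵥ* K := by
        simp only [sub_vecMul, add_vecMul]
        abel
    _ = α := by
        rw [vecMul_exp_smul_quadratic hUp, vecMul_exp_smul_quadratic hUm, hw, sub_zero, zero_add]

/-- if U⁻, U⁺ both solve U² - U(λI - D̃) + λ(B - D̃) = 0 with U⁺ - U⁻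
invertible, and wλ(B - D̃) = α, then
F(x) = v(U⁺-U⁻)⁻¹(e^{U⁺x} - e^{U⁻x}) + w(I - e^{U⁻x}) satisfies
F'' - F'(λI - D̃) + λF(B - D̃) = α and F(0) = 0. -/
theorem stmt_19 (c : ℕ) (lam : ℝ) (B D Um Up : Matrix (Fin c) (Fin c) ℝ)
    (hUm : Um * Um - Um * (lam • (1 : Matrix (Fin c) (Fin c) ℝ) - D)
      + lam • (B - D) = 0)
    (hUp : Up * Up - Up * (lam • (1 : Matrix (Fin c) (Fin c) ℝ) - D)
      + lam • (B - D) = 0)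
    (hinv : IsUnit (Up - Um))
    (v w α : Fin c → ℝ)
    (hw : w ᵥ* (lam • (B - D)) = α)
    (F : ℝ → Fin c → ℝ)
    (hF : F = fun x : ℝ =>
      v ᵥ* ((Up - Um)⁻¹ * (NormedSpace.exp (x • Up) - NormedSpace.exp (x • Um)))
        + w ᵥ* ((1 : Matrix (Fin c) (Fin c) ℝ) - NormedSpace.exp (x • Um))) :
    (∀ x : ℝ,
      deriv (deriv F) x - (deriv F x) ᵥ* (lam • (1 : Matrix (Fin c) (Fin c) ℝ) - D)
        + lam • ((F x) ᵥ* (B - D)) = α) ∧ F 0 = 0 :=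
  stmt_19_general c lam B D Um Up hUm hUp v w α hw F hF
end
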